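/- The Whitney numbers of the first kind of ℰ^n are the signed Stirling numbers of the first kind shifted by one: for 0 ≤ k ≤ n, the sum of μ_{ℰ^N}((∅,P_⊥),(A,P)) over all embedded subsets (A,P) ∈ ℰ^N of rank k equals s_{n+1, n+1−k}, the signed Stirling number of the first kind. -/

import Mathlib

open scoped BigOperators

/-- `modp n A` is the modular partition `P^A_⊥` of `Fin n` whose unique (possibly)
non-singleton block is `A`, all other blocks being singletons. -/
def modp (n : ℕ) (A : Set (Fin n)) : Setoid (Fin n) where
  r x y := x = y ∨ (x ∈ A ∧ y ∈ A)
  iseqv := by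
    refine ⟨fun _ => Or.inl rfl, ?_, ?_⟩
    · rintro x y (rfl | ⟨hx, hy⟩)
      · exact Or.inl rfl
      · exact Or.inr ⟨hy, hx⟩
    · rintro x y z (rfl | ⟨hx, hy⟩) h
      · exact h
      · rcases h with rfl | ⟨hy', hz⟩
        · exact Or.inr ⟨hx, hy⟩
        · exact Or.inr ⟨hx, hz⟩

/-- The product `X^N = 2^N × 𝒫^N` of the subset lattice and the partition lattice,
ordered componentwise. -/
abbrev XN (n : ℕ) := Set (Fin n) × Setoid (Fin n)

/-- The closure operator `cl` on `X^N`:  `cl(∅,P) = (∅,P)` and, for `A ≠ ∅`,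
`cl(A,P) = (Ā, P ⊔ P^A_⊥)` where `Ā` is the block of `P ⊔ P^A_⊥` containing `A`. -/
def EmbClosure (n : ℕ) (x : XN n) : XN n :=
  ({y | ∃ a ∈ x.1, (x.2 ⊔ modp n x.1) y a}, x.2 ⊔ modp n x.1)

/-- An embedded subset is a pair that coincides with its closure. -/
def IsEmbedded (n : ℕ) (x : XN n) : Prop := EmbClosure n x = x

/-- The lattice `ℰ^N` of embedded subsets, with the induced order. -/
abbrev Emb (n : ℕ) := {x : XN n // IsEmbedded n x}

lemma modp_le_of_subsingleton {n : ℕ} {A : Set (Fin n)} (h : A.Subsingleton)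
    (Q : Setoid (Fin n)) : modp n A ≤ Q := by
  rw [Setoid.le_def]
  intro x y hxy
  rcases hxy with rfl | ⟨hx, hy⟩
  · exact Q.refl' x
  · obtain rfl := h hx hy
    exact Q.refl' x

lemma modp_eq_bot_of_subsingleton {n : ℕ} {A : Set (Fin n)} (h : A.Subsingleton) :
    modp n A = ⊥ :=
  le_antisymm (modp_le_of_subsingleton h ⊥) bot_le

lemma embedded_empty (n : ℕ) (Q : Setoid (Fin n)) : IsEmbedded n (∅, Q) := by
  unfold IsEmbedded EmbClosure
  refine Prod.ext ?_ ?_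
  · simp
  · simpa using sup_eq_left.mpr (modp_le_of_subsingleton Set.subsingleton_empty Q)

lemma embedded_univ_top (n : ℕ) : IsEmbedded n (Set.univ, ⊤) := by
  unfold IsEmbedded EmbClosure
  refine Prod.ext ?_ ?_
  · ext y
    simp only [Set.mem_setOf_eq, Set.mem_univ, iff_true]
    exact ⟨y, trivial, Setoid.refl' _ y⟩
  · exact sup_eq_left.mpr le_top

lemma embedded_singleton (n : ℕ) (i : Fin n) : IsEmbedded n ({i}, ⊥) := by
  have hb : modp n ({i} : Set (Fin n)) = ⊥ :=
    modp_eq_bot_of_subsingleton Set.subsingleton_singleton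
  unfold IsEmbedded EmbClosure
  refine Prod.ext ?_ ?_
  · ext y
    simp only [Set.mem_setOf_eq, hb, sup_idem, Set.mem_singleton_iff]
    constructor
    · rintro ⟨a, ha, hrel⟩
      subst ha
      rw [modp_eq_bot_of_subsingleton Set.subsingleton_singleton, sup_idem] at hrel
      exact hrel
    · rintro rfl
      exact ⟨y, rfl, Setoid.refl' _ y⟩
  · simp [hb]

/-- The bottom element `(∅, P_⊥)` of `ℰ^N`. -/
def botE (n : ℕ) : Emb n := ⟨(∅, ⊥), embedded_empty n ⊥⟩

/-- The top element `(N, P^⊤)` of `ℰ^N`. -/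
def topE (n : ℕ) : Emb n := ⟨(Set.univ, ⊤), embedded_univ_top n⟩

/-- The atom `({i}, P_⊥)` of `ℰ^N`. -/
def atomS (n : ℕ) (i : Fin n) : Emb n := ⟨({i}, ⊥), embedded_singleton n i⟩

/-- The atom `(∅, [ij])` of `ℰ^N`, where `[ij]` is the atom of the partition lattice
whose unique non-singleton block is the pair `{i, j}`. -/
def atomP (n : ℕ) (i j : Fin n) : Emb n := ⟨(∅, modp n {i, j}), embedded_empty n _⟩

/-- A pair is an atom candidate: of the form `({i},P_⊥)` or `(∅,[ij])` with `i ≠ j`. -/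
def IsAtomPair (n : ℕ) (a : XN n) : Prop :=
  (∃ i : Fin n, a = ({i}, ⊥)) ∨ ∃ i j : Fin n, i ≠ j ∧ a = (∅, modp n {i, j})

/-- The number of blocks `|P|` of a partition. -/
noncomputable def numBlocks {α : Type*} (P : Setoid α) : ℕ := P.classes.ncard

/-- The rank function `r(A,P) = (n − |P|) + min{|A|,1}` of `ℰ^N`. -/
noncomputable def erank (n : ℕ) (x : XN n) : ℕ := (n - numBlocks x.2) + min x.1.ncard 1

/-- The partition `Q^S` of `S` induced by a partition `Q` of `N`. -/
def indPart {n : ℕ} (S : Set (Fin n)) (Q : Setoid (Fin n)) : Setoid S :=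
  Setoid.comap Subtype.val Q

/-- `mu` is the Möbius function of the (finite) poset `α`. -/
def IsMobius {α : Type*} [PartialOrder α] (mu : α → α → ℤ) : Prop :=
  (∀ x, mu x x = 1) ∧
  (∀ x y, ¬x ≤ y → mu x y = 0) ∧
  (∀ x y, x < y → mu x y = -∑ᶠ z ∈ Set.Ico x y, mu x z)

/-!
Colour the points of `N` and one extra point with `t` colours. A colouring `(c, g)`, with `c` the
colour of the extra point, determines the embedded subset `({i | g i = c}, ker g)`, and exactly
`t ^ (n + 1 - r x)` colourings give an embedded subset above a given `x`. Möbius inversion from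
`(∅, P_⊥)` turns this into `∑ₓ μ(⊥, x) t ^ (n + 1 - r x) = t (t - 1) ⋯ (t - n)`, the number of
injective colourings of `n + 1` points. Both sides are polynomials in `t`, so the Whitney numbers
are the coefficients of `descPochhammer ℤ (n + 1)`.
-/

open Finset

namespace IsMobius

variable {α : Type*} [PartialOrder α] [Fintype α] [DecidableEq α] [DecidableLE α]
  {mu : α → α → ℤ}

theorem sum_le_eq_ite (hmu : IsMobius mu) (a y : α) :
    ∑ x with x ≤ y, mu a x = if y = a then 1 else 0 := by
  classical
  have hIcc : ∑ x with x ≤ y, mu a x = ∑ x with a ≤ x ∧ x ≤ y, mu a x := by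
    rw [Finset.sum_filter, Finset.sum_filter]
    refine Finset.sum_congr rfl fun x _ => ?_
    by_cases hax : a ≤ x
    · simp [hax]
    · simp [hax, hmu.2.1 a x hax]
  rw [hIcc]
  by_cases hay : a ≤ y
  · rcases hay.eq_or_lt with rfl | hlt
    · rw [if_pos rfl, Finset.sum_eq_single_of_mem a (by simp) fun x hx hxa =>
        (hxa (le_antisymm (Finset.mem_filter.1 hx).2.2 (Finset.mem_filter.1 hx).2.1)).elim,
        hmu.1]
    · have hsplit : univ.filter (fun x => a ≤ x ∧ x ≤ y) =
          insert y (univ.filter fun x => a ≤ x ∧ x < y) := by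
        ext x
        simp only [Finset.mem_filter, Finset.mem_univ, true_and, Finset.mem_insert]
        constructor
        · rintro ⟨hax, hxy⟩
          exact hxy.eq_or_lt.imp_right (⟨hax, ·⟩)
        · rintro (rfl | ⟨hax, hxy⟩)
          exacts [⟨hlt.le, le_rfl⟩, ⟨hax, hxy.le⟩]
      have hIco : ((univ.filter fun x => a ≤ x ∧ x < y : Finset α) : Set α) =
          Set.Ico a y := by
        ext; simp
      rw [if_neg hlt.ne', hsplit, Finset.sum_insert (by simp), hmu.2.2 a y hlt, ← hIco,
        finsum_mem_coe_finset, neg_add_cancel]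
  · rw [if_neg fun h => hay h.ge, Finset.sum_eq_zero]
    simp only [Finset.mem_filter]
    exact fun x hx => (hay (hx.2.1.trans hx.2.2)).elim

theorem sum_mul_card_le_eq_card {ι : Type*} [Fintype ι] (hmu : IsMobius mu) (a : α)
    (f : ι → α) :
    ∑ x, mu a x * #{i | x ≤ f i} = #{i | f i = a} := by
  calc ∑ x, mu a x * #{i | x ≤ f i}
      = ∑ x, ∑ i, if x ≤ f i then mu a x else 0 := by
        simp only [Finset.natCast_card_filter, Finset.mul_sum, mul_ite, mul_one, mul_zero]
    _ = ∑ i, ∑ x with x ≤ f i, mu a x := by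
        rw [Finset.sum_comm]; simp only [Finset.sum_filter]
    _ = #{i | f i = a} := by
        simp only [hmu.sum_le_eq_ite, Finset.natCast_card_filter]

end IsMobius

section Counting

variable {α β : Type*} [Fintype β]

theorem numBlocks_eq_natCard_quotient (P : Setoid α) : numBlocks P = Nat.card (Quotient P) := by
  rw [numBlocks, ← Nat.card_coe_set_eq, Nat.card_congr P.quotientEquivClasses.symm]

theorem card_filter_le_ker [Fintype α] [DecidableEq α] (P : Setoid α)
    [DecidablePred fun g : α → β => P ≤ Setoid.ker g] :
    #{g : α → β | P ≤ Setoid.ker g} = Fintype.card β ^ numBlocks P := by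
  rw [← Fintype.card_subtype, ← Nat.card_eq_fintype_card, Nat.card_congr (Setoid.liftEquiv P),
    Nat.card_fun, numBlocks_eq_natCard_quotient, Nat.card_eq_fintype_card]

theorem card_filter_forall_apply_eq {A : Set α} {g : α → β}
    [DecidablePred fun c => ∀ a ∈ A, g a = c] (hg : (g '' A).Subsingleton) :
    #{c | ∀ a ∈ A, g a = c} = if A = ∅ then Fintype.card β else 1 := by
  split_ifs with hA
  · simp [hA]
  · obtain ⟨a, ha⟩ := Set.nonempty_iff_ne_empty.2 hA
    rw [Finset.card_eq_one]
    refine ⟨g a, Finset.ext fun c => ?_⟩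
    simp only [Finset.mem_filter, Finset.mem_univ, true_and, Finset.mem_singleton]
    exact ⟨fun h => (h a ha).symm, fun h b hb => h ▸ hg ⟨b, hb, rfl⟩ ⟨a, ha, rfl⟩⟩

theorem numBlocks_le_card [Finite α] (P : Setoid α) : numBlocks P ≤ Nat.card α := by
  rw [numBlocks_eq_natCard_quotient]
  exact Nat.card_le_card_of_surjective _ Quotient.mk_surjective

end Counting

instance Setoid.instFinite {α : Type*} [Finite α] : Finite (Setoid α) :=
  Finite.of_injective _ fun _ _ => Setoid.eq_iff_rel_eq.2

noncomputable instance {n : ℕ} : Fintype (Emb n) := Fintype.ofFinite _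

section EmbeddedSubsets

open scoped Classical

variable {n : ℕ}

theorem erank_le (x : XN n) : erank n x ≤ n + 1 :=
  add_le_add (Nat.sub_le _ _) (min_le_right _ _)

theorem IsEmbedded.modp_le {x : XN n} (hx : IsEmbedded n x) : modp n x.1 ≤ x.2 :=
  sup_eq_left.1 (congrArg Prod.snd hx)

theorem isEmbedded_of_modp_le {A : Set (Fin n)} {P : Setoid (Fin n)} (hA : modp n A ≤ P)
    (hsat : ∀ a ∈ A, ∀ y, P y a → y ∈ A) : IsEmbedded n (A, P) := by
  have hsup : P ⊔ modp n A = P := sup_eq_left.2 hA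
  refine Prod.ext ?_ hsup
  ext y
  dsimp only [EmbClosure]
  rw [hsup]
  exact ⟨fun ⟨a, ha, hya⟩ => hsat a ha y hya, fun hy => ⟨y, hy, P.refl' y⟩⟩

theorem modp_le_ker {t : ℕ} (c : Fin t) (g : Fin n → Fin t) :
    modp n {i | g i = c} ≤ Setoid.ker g := by
  rintro x y (rfl | ⟨hx, hy⟩)
  exacts [rfl, hx.trans hy.symm]

namespace Emb

def ofColoring (t : ℕ) (p : Fin t × (Fin n → Fin t)) : Emb n :=
  ⟨({i | p.2 i = p.1}, Setoid.ker p.2), isEmbedded_of_modp_le (modp_le_ker p.1 p.2)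
    fun _ ha _ hya => (Setoid.ker_def.1 hya).trans ha⟩

theorem le_ofColoring_iff {t : ℕ} (x : Emb n) (p : Fin t × (Fin n → Fin t)) :
    x ≤ ofColoring t p ↔ (∀ i ∈ x.1.1, p.2 i = p.1) ∧ x.1.2 ≤ Setoid.ker p.2 :=
  Iff.rfl

theorem ofColoring_eq_botE_iff {t : ℕ} (p : Fin t × (Fin n → Fin t)) :
    ofColoring t p = botE n ↔ Function.Injective (Fin.cons p.1 p.2 : Fin (n + 1) → Fin t) := by
  rw [Fin.cons_injective_iff, Setoid.injective_iff_ker_bot, Subtype.ext_iff, Prod.ext_iff]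
  simp only [ofColoring, botE, Set.eq_empty_iff_forall_notMem, Set.mem_ofPred_eq, Set.mem_range,
    not_exists]

theorem card_filter_le_ofColoring (t : ℕ) (x : Emb n) :
    #{p | x ≤ ofColoring t p} = t ^ (n + 1 - erank n x.1) := by
  obtain ⟨⟨A, P⟩, hx⟩ := x
  have hconst : ∀ g : Fin n → Fin t, P ≤ Setoid.ker g → (g '' A).Subsingleton := by
    rintro g hg _ ⟨a, ha, rfl⟩ _ ⟨b, hb, rfl⟩
    exact hg (hx.modp_le (Or.inr ⟨ha, hb⟩))
  calc #{p | (⟨(A, P), hx⟩ : Emb n) ≤ ofColoring t p}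
      = ∑ g : Fin n → Fin t, if P ≤ Setoid.ker g then #{c | ∀ a ∈ A, g a = c} else 0 := by
        simp only [le_ofColoring_iff, Finset.card_filter, Fintype.sum_prod_type_right, ite_and]
        refine Finset.sum_congr rfl fun g _ => ?_
        by_cases hg : P ≤ Setoid.ker g <;> simp [hg]
    _ = #{g : Fin n → Fin t | P ≤ Setoid.ker g} * if A = ∅ then t else 1 := by
        rw [Finset.card_filter, Finset.sum_mul]
        refine Finset.sum_congr rfl fun g _ => ?_
        by_cases hg : P ≤ Setoid.ker g
        · rw [if_pos hg, if_pos hg, one_mul, card_filter_forall_apply_eq (hconst g hg),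
            Fintype.card_fin]
        · rw [if_neg hg, if_neg hg, zero_mul]
    _ = t ^ (n + 1 - erank n (A, P)) := by
        have hP : numBlocks P ≤ n := by simpa using numBlocks_le_card P
        rw [card_filter_le_ker, Fintype.card_fin]
        simp only [erank]
        split_ifs with hA
        · rw [hA, Set.ncard_empty, ← pow_succ]
          congr 1
          omega
        · have hA' : min A.ncard 1 = 1 :=
            min_eq_right ((Set.ncard_pos).2 (Set.nonempty_iff_ne_empty.2 hA))
          rw [hA', mul_one]
          congr 1
          omega

theorem card_filter_ofColoring_eq_botE (t : ℕ) :
    #{p | ofColoring t p = botE n} = t.descFactorial (n + 1) := by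
  simp_rw [ofColoring_eq_botE_iff]
  rw [← Fintype.card_subtype]
  calc Fintype.card {p : Fin t × (Fin n → Fin t) // Function.Injective (Fin.cons p.1 p.2)}
      = Fintype.card {f : Fin (n + 1) → Fin t // Function.Injective f} :=
        Fintype.card_congr ((Fin.consEquiv fun _ => Fin t).subtypeEquiv fun _ => Iff.rfl)
    _ = t.descFactorial (n + 1) := by
        rw [Fintype.card_congr (Equiv.subtypeInjectiveEquivEmbedding _ _),
          Fintype.card_embedding_eq, Fintype.card_fin, Fintype.card_fin]

end Emb

open Polynomial

variable {mu : Emb n → Emb n → ℤ}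

theorem IsMobius.sum_mul_pow_erank (hmu : IsMobius mu) (t : ℕ) :
    ∑ x : Emb n, mu (botE n) x * (t : ℤ) ^ (n + 1 - erank n x.1) = t.descFactorial (n + 1) := by
  simpa [Emb.card_filter_le_ofColoring, Emb.card_filter_ofColoring_eq_botE] using
    hmu.sum_mul_card_le_eq_card (botE n) (Emb.ofColoring t)

theorem IsMobius.sum_C_mul_X_pow_erank (hmu : IsMobius mu) :
    ∑ x : Emb n, C (mu (botE n) x) * X ^ (n + 1 - erank n x.1) = descPochhammer ℤ (n + 1) := by
  refine Polynomial.eq_of_infinite_eval_eq _ _ ((Set.infinite_range_of_injective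
    Nat.cast_injective).mono ?_)
  rintro _ ⟨t, rfl⟩
  simp [Polynomial.eval_finsetSum, hmu.sum_mul_pow_erank, descPochhammer_eval_eq_descFactorial]

end EmbeddedSubsets

theorem whitney_first_general (n : ℕ) (k : ℕ) (hk : k ≤ n)
    (mu : Emb n → Emb n → ℤ) (hmu : IsMobius mu) :
    ∑ᶠ x ∈ {x : Emb n | erank n x.val = k}, mu (botE n) x =
      (descPochhammer ℤ (n + 1)).coeff (n + 1 - k) := by
  classical
  rw [finsum_mem_eq_toFinset_sum, Set.toFinset_ofPred, Finset.sum_filter,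
    ← hmu.sum_C_mul_X_pow_erank, Polynomial.finsetSum_coeff]
  refine Finset.sum_congr rfl fun x _ => ?_
  have hx := erank_le x.1
  rw [Polynomial.coeff_C_mul_X_pow]
  exact if_congr ⟨fun h => by omega, fun h => by omega⟩ rfl rfl

theorem whitney_first (n : ℕ) (hn : 1 ≤ n) (k : ℕ) (hk : k ≤ n)
    (mu : Emb n → Emb n → ℤ) (hmu : IsMobius mu) :
    ∑ᶠ x ∈ {x : Emb n | erank n x.val = k}, mu (botE n) x =
      (descPochhammer ℤ (n + 1)).coeff (n + 1 - k) :=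
  whitney_first_general n k hk mu hmu
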